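/- arXiv:2603.26656 — 2 statements merged into one kernel-verified Lean document; each statement's English description precedes it below -/
import Mathlib

section
/- For every integer n with 1 ≤ n ≤ 7, the Euler characteristic of the clique complex of the partition graph G_n equals 1; that is, χ_n = Σ_{r≥1} (-1)^{r-1} c_r(n) = 1 for 1 ≤ n ≤ 7. -/
/-!
Write `f(s) = Σ (-1)^#t` over the cliques `t ⊆ s` of `G_n`, the empty clique included, so that
`χ_n = 1 - f(V)`. The cliques of `s ∪ {v}` containing `v` are `v` together with a clique of the
neighbourhood of `v` in `s`, whence `f(s ∪ {v}) = f(s) - f(s ∩ N(v))`. This recursion is evaluated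
by the kernel for `n ≤ 7` on an explicit list of the partitions of `n` (grown from those of `n - 1`
by adding a cell), with adjacency decided by comparing the partitions obtained by removing a cell.
-/

/-- `nu` is obtained from `lam` by decreasing a single part by 1
(deleting the part if it becomes 0). -/
def stepDown {n : ℕ} (lam : Nat.Partition n) (nu : Nat.Partition (n - 1)) : Prop :=
  ∃ k ∈ lam.parts, nu.parts = Multiset.filter (· ≠ 0) ((k - 1) ::ₘ lam.parts.erase k)

/-- The partition graph `G_n`: vertices are the integer partitions of `n`, and two
distinct partitions are adjacent iff some partition of `n - 1` is obtained from
each of them by decreasing a single part by 1 (an elementary transfer of one cell). -/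
def partitionGraph (n : ℕ) : SimpleGraph (Nat.Partition n) where
  Adj lam mu := lam ≠ mu ∧ ∃ nu : Nat.Partition (n - 1), stepDown lam nu ∧ stepDown mu nu
  symm := by
    constructor
    rintro a b ⟨hne, nu, ha, hb⟩
    exact ⟨hne.symm, nu, hb, ha⟩
  loopless := by
    constructor
    rintro a ⟨hne, _⟩
    exact hne rfl

/-- `cliqueCount n r = c_r(n)`, the number of cliques of size `r` in `G_n`. -/
noncomputable def cliqueCount (n r : ℕ) : ℕ :=
  Set.ncard {s : Finset (Nat.Partition n) | (partitionGraph n).IsNClique r s}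

/-- The Euler characteristic of the clique complex of `G_n`:
`χ_n = Σ_{r ≥ 1} (-1)^(r-1) c_r(n)` (a finite sum). -/
noncomputable def chi (n : ℕ) : ℤ :=
  ∑ᶠ r ∈ Set.Ici 1, (-1 : ℤ) ^ (r - 1) * (cliqueCount n r : ℤ)

open Finset

namespace SimpleGraph

variable {V : Type*} (G : SimpleGraph V) [DecidableEq V] [DecidableRel G.Adj]

/-- Minus the reduced Euler characteristic of the clique complex of `G` restricted to `s`. -/
def cliqueAltSum (s : Finset V) : ℤ :=
  ∑ t ∈ s.powerset.filter (fun t : Finset V => G.IsClique (t : Set V)), (-1) ^ #t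

theorem cliqueAltSum_insert {v : V} {s : Finset V} (hv : v ∉ s) :
    G.cliqueAltSum (insert v s) = G.cliqueAltSum s - G.cliqueAltSum {w ∈ s | G.Adj v w} := by
  have hnbhd : {t ∈ s.powerset | t ⊆ {w ∈ s | G.Adj v w}} = {w ∈ s | G.Adj v w}.powerset := by
    ext t
    simp only [mem_filter, mem_powerset]
    exact ⟨fun h => h.2, fun h => ⟨h.trans (filter_subset _ _), h⟩⟩
  have hinsert : ∀ t ∈ s.powerset,
      (if G.IsClique (insert v t : Finset V) then (-1 : ℤ) ^ #(insert v t) else 0) =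
        -if t ⊆ {w ∈ s | G.Adj v w} ∧ G.IsClique (t : Set V) then (-1) ^ #t else 0 := by
    intro t ht
    have hvt : v ∉ t := fun h => hv (mem_powerset.1 ht h)
    have hclique : G.IsClique (insert v t : Finset V) ↔
        t ⊆ {w ∈ s | G.Adj v w} ∧ G.IsClique (t : Set V) := by
      rw [coe_insert, isClique_insert, and_comm, subset_iff]
      simp only [mem_filter, mem_coe]
      exact and_congr_left' ⟨fun h w hw =>
        ⟨mem_powerset.1 ht hw, h w hw (ne_of_mem_of_not_mem hw hvt).symm⟩, fun h w hw _ => (h hw).2⟩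
    simp only [hclique, card_insert_of_notMem hvt, pow_succ]
    split_ifs <;> ring
  simp only [cliqueAltSum, sum_filter]
  rw [sum_powerset_insert hv, sum_congr rfl hinsert, sum_neg_distrib, ← hnbhd, sum_filter]
  simp only [ite_and]
  ring

/-- Computes `G.cliqueAltSum` of the vertices of `l` satisfying `P` (see `listCliqueAltSum_eq`);
structural recursion on `l`, so that the kernel can evaluate it. -/
def listCliqueAltSum : List V → (V → Bool) → ℤ
  | [], _ => 1
  | v :: l, P => listCliqueAltSum l P -
      if P v then listCliqueAltSum l (fun w => P w && G.Adj v w) else 0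

theorem listCliqueAltSum_eq {l : List V} (hl : l.Nodup) (P : V → Bool) :
    G.listCliqueAltSum l P = G.cliqueAltSum {v ∈ l.toFinset | P v} := by
  induction l generalizing P with
  | nil => simp [listCliqueAltSum, cliqueAltSum, filter_singleton]
  | cons v l ih =>
    obtain ⟨hvl, hl⟩ := List.nodup_cons.1 hl
    have hv : v ∉ {w ∈ l.toFinset | P w} := fun h => hvl (List.mem_toFinset.1 (mem_filter.1 h).1)
    rw [listCliqueAltSum, List.toFinset_cons, filter_insert]
    split_ifs with hP
    · rw [cliqueAltSum_insert G hv, ih hl, ih hl, filter_filter]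
      simp only [Bool.and_eq_true, decide_eq_true_eq]
    · rw [ih hl, sub_zero]

theorem finsum_cliqueCount_eq [Fintype V] :
    ∑ᶠ r ∈ Set.Ici 1, (-1 : ℤ) ^ (r - 1) * (Set.ncard {s : Finset V | G.IsNClique r s} : ℤ) =
      1 - G.cliqueAltSum univ := by
  set N := Fintype.card V
  set c : ℕ → ℤ := fun r => #(G.cliqueFinset r)
  have hc : ∀ r, (Set.ncard (G.cliqueSet r) : ℤ) = c r := fun r => by
    rw [← coe_cliqueFinset, Set.ncard_coe_finset]
  have hc0 : c 0 = 1 := by rw [← hc, cliqueSet_zero, Set.ncard_singleton, Nat.cast_one]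
  have hcN : ∀ r, N < r → c r = 0 := fun r hr => by
    simp only [c, (G.cliqueFree_of_card_lt hr).cliqueFinset, card_empty, Nat.cast_zero]
  have hsum : G.cliqueAltSum univ = ∑ r ∈ range (N + 1), (-1) ^ r * c r := by
    rw [cliqueAltSum, ← sum_fiberwise_of_maps_to (g := card) (t := range (N + 1))
      fun t _ => mem_range.2 (Nat.lt_succ_of_le (card_le_univ t))]
    refine sum_congr rfl fun r _ => ?_
    rw [sum_congr rfl fun t ht => by rw [(mem_filter.1 ht).2], sum_const, nsmul_eq_mul, mul_comm]
    congr 3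
    ext t
    simp [cliqueFinset, isNClique_iff]
  simp_rw [← mem_cliqueSet_iff, Set.ofPred_mem_eq, hc]
  rw [finsum_mem_eq_sum_of_subset (t := Ico 1 (N + 1)), sum_Ico_eq_sum_range, hsum,
    sum_range_succ', hc0]
  · simp only [add_tsub_cancel_right, add_tsub_cancel_left, pow_succ, pow_zero, one_mul]
    rw [sub_add_cancel_right, ← sum_neg_distrib]
    refine sum_congr rfl fun k _ => ?_
    rw [add_comm]
    ring
  · intro r ⟨hr, hsupp⟩
    simp only [Set.mem_Ici] at hr
    simp only [coe_Ico, Set.mem_Ico]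
    refine ⟨hr, Nat.lt_succ_of_le (not_lt.1 fun hN => hsupp ?_)⟩
    simp [hcN r hN]
  · intro r hr
    exact (mem_Ico.1 hr).1

end SimpleGraph

namespace Nat.Partition

variable {n : ℕ}

/-- Add a cell to a part equal to `k`, or open a new part `1` if `p` has no part `k`. -/
def addCell (p : n.Partition) (k : ℕ) : (n + 1).Partition :=
  if hk : k ∈ p.parts then
    { parts := (k + 1) ::ₘ p.parts.erase k
      parts_pos := fun hi => (Multiset.mem_cons.1 hi).elim (· ▸ k.succ_pos)
        fun hi => p.parts_pos (Multiset.mem_of_mem_erase hi)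
      parts_sum := by
        rw [Multiset.sum_cons, add_right_comm, Multiset.sum_erase hk, p.parts_sum] }
  else
    { parts := 1 ::ₘ p.parts
      parts_pos := fun hi => (Multiset.mem_cons.1 hi).elim (· ▸ Nat.one_pos) p.parts_pos
      parts_sum := by rw [Multiset.sum_cons, p.parts_sum, add_comm] }

def removeCell (p : n.Partition) {k : ℕ} (hk : k ∈ p.parts) : (n - 1).Partition :=
  ofSums (n - 1) ((k - 1) ::ₘ p.parts.erase k) <| by
    have := Multiset.sum_erase hk
    have := p.parts_pos hk
    rw [Multiset.sum_cons, p.parts_sum] at *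
    omega

theorem addCell_removeCell (p : (n + 1).Partition) {k : ℕ} (hk : k ∈ p.parts) :
    (p.removeCell hk).addCell (k - 1) = p := by
  have hpos := p.parts_pos hk
  have herase : ∀ i ∈ p.parts.erase k, i ≠ 0 := fun i hi =>
    (p.parts_pos (Multiset.mem_of_mem_erase hi)).ne'
  ext1
  rcases Nat.lt_or_ge 1 k with hk1 | hk1
  · have hq : (p.removeCell hk).parts = (k - 1) ::ₘ p.parts.erase k := by
      rw [removeCell, ofSums_parts, Multiset.filter_eq_self]
      simpa [Nat.sub_ne_zero_of_lt hk1] using herase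
    rw [addCell, dif_pos (hq ▸ Multiset.mem_cons_self _ _)]
    simp only [hq, Multiset.erase_cons_head, Nat.sub_add_cancel hpos, Multiset.cons_erase hk]
  · obtain rfl : k = 1 := by omega
    have hq : (p.removeCell hk).parts = p.parts.erase 1 := by
      rw [removeCell, ofSums_parts, Nat.sub_self,
        Multiset.filter_cons_of_neg (p := (· ≠ 0)) _ (not_not.2 rfl),
        Multiset.filter_eq_self.2 herase]
    rw [addCell, dif_neg (by rw [hq]; exact fun h => herase 0 h rfl)]
    simp only [hq, Multiset.cons_erase hk]

theorem exists_addCell_eq (p : (n + 1).Partition) :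
    ∃ q : n.Partition, ∃ k < n + 1, q.addCell k = p := by
  have hne : p.parts ≠ 0 := fun h => by simpa [h] using p.parts_sum
  obtain ⟨k, hk⟩ := Multiset.exists_mem_of_ne_zero hne
  exact ⟨p.removeCell hk, k - 1, by have := p.le_of_mem_parts hk; omega, p.addCell_removeCell hk⟩

/-- Duplicates are removed with `pwFilter` on `parts` rather than `dedup`: the derived
`DecidableEq` of `Nat.Partition` does not reduce in the kernel. -/
def enum : (n : ℕ) → List n.Partition
  | 0 => [default]
  | n + 1 => ((enum n).flatMap fun p => (List.range (n + 1)).map p.addCell).pwFilter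
      (·.parts ≠ ·.parts)

theorem nodup_enum (n : ℕ) : (enum n).Nodup := by
  cases n with
  | zero => exact List.nodup_singleton _
  | succ n => exact (List.pairwise_pwFilter _).imp fun h he => h (congrArg parts he)

theorem mem_enum (p : n.Partition) : p ∈ enum n := by
  induction n with
  | zero => exact List.mem_singleton.2 (Subsingleton.elim _ _)
  | succ n ih =>
    obtain ⟨q, k, hk, rfl⟩ := exists_addCell_eq p
    have hmem : q.addCell k ∈ (enum n).flatMap fun p => (List.range (n + 1)).map p.addCell :=
      List.mem_flatMap.2 ⟨q, ih q, List.mem_map.2 ⟨k, List.mem_range.2 hk, rfl⟩⟩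
    by_contra hnot
    have hne : ∀ b ∈ enum (n + 1), (q.addCell k).parts ≠ b.parts := fun b hb hparts =>
      hnot (Partition.ext hparts ▸ hb)
    refine (List.forall_mem_pwFilter ?_ _ _).1 hne _ hmem rfl
    intro x y z hxz
    by_contra! h
    exact hxz (h.1.trans h.2)

def cellRemovals (p : n.Partition) : Multiset (Multiset ℕ) :=
  p.parts.map fun k => ((k - 1) ::ₘ p.parts.erase k).filter (· ≠ 0)

end Nat.Partition

theorem stepDown_iff_mem_cellRemovals {n : ℕ} (lam : n.Partition) (nu : (n - 1).Partition) :
    stepDown lam nu ↔ nu.parts ∈ lam.cellRemovals := by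
  simp only [stepDown, Nat.Partition.cellRemovals, Multiset.mem_map, eq_comm]

theorem partitionGraph_adj_iff {n : ℕ} {a b : n.Partition} :
    (partitionGraph n).Adj a b ↔ a ≠ b ∧ ∃ ν ∈ a.cellRemovals, ν ∈ b.cellRemovals := by
  constructor
  · rintro ⟨hne, nu, ha, hb⟩
    exact ⟨hne, nu.parts, (stepDown_iff_mem_cellRemovals a nu).1 ha,
      (stepDown_iff_mem_cellRemovals b nu).1 hb⟩
  · rintro ⟨hne, ν, ha, hb⟩
    obtain ⟨k, hk, rfl⟩ := Multiset.mem_map.1 ha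
    exact ⟨hne, a.removeCell hk, ⟨k, hk, rfl⟩, (stepDown_iff_mem_cellRemovals b _).2 hb⟩

instance (n : ℕ) : DecidableRel (partitionGraph n).Adj := fun a b =>
  haveI := Multiset.decidableExistsMultiset (m := a.cellRemovals) (p := (· ∈ b.cellRemovals))
  decidable_of_iff _ partitionGraph_adj_iff.symm

theorem chi_eq_one_sub_listCliqueAltSum (n : ℕ) :
    chi n = 1 - (partitionGraph n).listCliqueAltSum (Nat.Partition.enum n) fun _ => true := by
  have huniv : {p ∈ (Nat.Partition.enum n).toFinset | true} = univ := by
    ext p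
    simp [Nat.Partition.mem_enum]
  rw [(partitionGraph n).listCliqueAltSum_eq (Nat.Partition.nodup_enum n), huniv,
    ← (partitionGraph n).finsum_cliqueCount_eq]
  rfl

theorem stmt0 : ∀ n : ℕ, 1 ≤ n → n ≤ 7 → chi n = 1 := by
  have hreduced : ∀ n < 8,
      (partitionGraph n).listCliqueAltSum (Nat.Partition.enum n) (fun _ => true) = 0 := by
    decide
  intro n _ hn
  rw [chi_eq_one_sub_listCliqueAltSum, hreduced n (by omega), sub_zero]
end

section
/- The number of maximal cliques of size 2 in the partition graph G_2 equals 1, and for every integer n with 3 ≤ n ≤ 25 the number of maximal cliques of size 2 in G_n equals 2; that is, m_e(2) = 1 and m_e(n) = 2 for 3 ≤ n ≤ 25. -/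
/-- A maximal clique of `G_n`: a clique that is not a proper subset of any other clique. -/
def IsMaxClique (n : ℕ) (s : Finset (Nat.Partition n)) : Prop :=
  (partitionGraph n).IsClique (s : Set (Nat.Partition n)) ∧
    ∀ t : Finset (Nat.Partition n),
      (partitionGraph n).IsClique (t : Set (Nat.Partition n)) → s ⊆ t → s = t

/-- `maxEdgeCount n = m_e(n)`, the number of maximal cliques of `G_n` of cardinality 2. -/
noncomputable def maxEdgeCount (n : ℕ) : ℕ :=
  Set.ncard {s : Finset (Nat.Partition n) | IsMaxClique n s ∧ s.card = 2}

/-- `maxCliqueCount n = m_max(n)`, the total number of maximal cliques of `G_n`. -/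
noncomputable def maxCliqueCount (n : ℕ) : ℕ :=
  Set.ncard {s : Finset (Nat.Partition n) | IsMaxClique n s}

/-!
Two adjacent partitions `λ, μ ⊢ n` both cover a common `ν ⊢ n - 1`, and all partitions
covering `ν` are pairwise adjacent; they are `ν + (1)` and, for each distinct part `j` of `ν`,
the partition obtained by raising one `j` to `j + 1`. So if `{λ, μ}` is a maximal clique, `ν`
has a single distinct part, `ν = (c^(k+1))`, and `{λ, μ} = {(c+1, c^k), (1, c^(k+1))}`. When
`k ≥ 1` and `c ≥ 2` the partition `(c+1, c-1, c^(k-1), 1)` is adjacent to both, so `k = 0` or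
`c = 1`: the edge is `{(n), (n-1, 1)}` or `{(1^n), (2, 1^(n-2))}`. Both are maximal, since `(n)`
and `(1^n)` have a single neighbour, and they coincide exactly when `n = 2`.
-/

open Multiset

theorem stepDown_iff {n : ℕ} {lam : Nat.Partition n} {nu : Nat.Partition (n - 1)} :
    stepDown lam nu ↔ lam.parts = 1 ::ₘ nu.parts ∨
      ∃ j ∈ nu.parts, lam.parts = (j + 1) ::ₘ nu.parts.erase j := by
  have filter_pos : ∀ {s : Multiset ℕ}, (∀ i ∈ s, 0 < i) → s.filter (· ≠ 0) = s :=
    fun h => filter_eq_self.mpr fun i hi => (h i hi).ne'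
  constructor
  · rintro ⟨k, hk, hnu⟩
    have hpos : ∀ i ∈ lam.parts.erase k, 0 < i :=
      fun i hi => lam.parts_pos (mem_of_mem_erase hi)
    obtain rfl | hk1 := eq_or_ne k 1
    · left
      rw [filter_cons_of_neg _ (by simp), filter_pos hpos] at hnu
      rw [hnu, cons_erase hk]
    · right
      have hk0 : 0 < k := lam.parts_pos hk
      rw [filter_cons_of_pos _ (by omega), filter_pos hpos] at hnu
      refine ⟨k - 1, by simp [hnu], ?_⟩
      rw [hnu, erase_cons_head, Nat.sub_add_cancel hk0, cons_erase hk]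
  · rintro (h | ⟨j, hj, h⟩)
    · refine ⟨1, by simp [h], ?_⟩
      rw [h, erase_cons_head, filter_cons_of_neg _ (by simp),
        filter_pos fun i hi => nu.parts_pos hi]
    · refine ⟨j + 1, by simp [h], ?_⟩
      rw [h, erase_cons_head, Nat.add_sub_cancel, cons_erase hj,
        filter_pos fun i hi => nu.parts_pos hi]

theorem stepDown_of_parts_eq_succ_cons {n j : ℕ} {X : Multiset ℕ} {lam : Nat.Partition n}
    {nu : Nat.Partition (n - 1)} (hlam : lam.parts = (j + 1) ::ₘ X) (hnu : nu.parts = j ::ₘ X) :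
    stepDown lam nu :=
  stepDown_iff.mpr <| .inr ⟨j, by simp [hnu], by rw [hlam, hnu, erase_cons_head]⟩

theorem exists_parts_eq_one_cons {n : ℕ} (hn : 1 ≤ n) (nu : Nat.Partition (n - 1)) :
    ∃ rho : Nat.Partition n, rho.parts = 1 ::ₘ nu.parts :=
  ⟨⟨1 ::ₘ nu.parts, by grind, by rw [sum_cons, nu.parts_sum]; omega⟩, rfl⟩

theorem exists_parts_eq_succ_cons_erase {n j : ℕ} {nu : Nat.Partition (n - 1)}
    (hj : j ∈ nu.parts) :
    ∃ rho : Nat.Partition n, rho.parts = (j + 1) ::ₘ nu.parts.erase j := by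
  have hsum := sum_erase hj
  have := nu.parts_sum
  have := nu.parts_pos hj
  have := Nat.Partition.le_of_mem_parts hj
  refine ⟨⟨(j + 1) ::ₘ nu.parts.erase j, fun hi => ?_, by rw [sum_cons]; omega⟩, rfl⟩
  rcases mem_cons.mp hi with rfl | hi
  exacts [Nat.succ_pos _, nu.parts_pos (mem_of_mem_erase hi)]

theorem IsMaxClique.mem_of_forall_adj {n : ℕ} {s : Finset (Nat.Partition n)}
    {a : Nat.Partition n} (hs : IsMaxClique n s)
    (h : ∀ b ∈ s, a ≠ b → (partitionGraph n).Adj a b) : a ∈ s := by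
  rw [hs.2 (insert a s) (by simpa using hs.1.insert h) (Finset.subset_insert a s)]
  exact Finset.mem_insert_self a s

theorem IsMaxClique.mem_of_stepDown {n : ℕ} {lam mu rho : Nat.Partition n}
    {nu : Nat.Partition (n - 1)} (hs : IsMaxClique n {lam, mu}) (hlam : stepDown lam nu)
    (hmu : stepDown mu nu) (hrho : stepDown rho nu) : rho ∈ ({lam, mu} : Finset _) := by
  refine hs.mem_of_forall_adj fun b hb hne => ⟨hne, nu, hrho, ?_⟩
  rcases Finset.mem_insert.mp hb with rfl | hb
  exacts [hlam, Finset.mem_singleton.mp hb ▸ hmu]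

theorem isMaxClique_pair_of_forall_adj_iff {n : ℕ} {a b : Nat.Partition n}
    (h : ∀ x, (partitionGraph n).Adj a x ↔ x = b) : IsMaxClique n {a, b} := by
  have hab : (partitionGraph n).Adj a b := (h b).mpr rfl
  refine ⟨by simpa [SimpleGraph.isClique_pair] using fun _ => hab, fun t ht hst => ?_⟩
  refine hst.antisymm fun x hx => ?_
  have ha : a ∈ t := hst (Finset.mem_insert_self a _)
  by_cases hxa : x = a
  · simp [hxa]
  · simp [(h x).mp (ht ha hx (Ne.symm hxa))]

theorem two_lt_ncard_stepDown {n i j : ℕ} {nu : Nat.Partition (n - 1)} (hi : i ∈ nu.parts)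
    (hj : j ∈ nu.parts) (hij : i ≠ j) :
    2 < {rho : Nat.Partition n | stepDown rho nu}.ncard := by
  have hn : 1 ≤ n := by have := nu.parts_pos hi; have := Nat.Partition.le_of_mem_parts hi; omega
  obtain ⟨rho, hrho⟩ := exists_parts_eq_one_cons hn nu
  obtain ⟨rhoi, hrhoi⟩ := exists_parts_eq_succ_cons_erase (n := n) hi
  obtain ⟨rhoj, hrhoj⟩ := exists_parts_eq_succ_cons_erase (n := n) hj
  have hrho_ne : ∀ k ∈ nu.parts, ∀ sigma : Nat.Partition n,
      sigma.parts = (k + 1) ::ₘ nu.parts.erase k → rho ≠ sigma := by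
    rintro k hk sigma hsigma rfl
    have hcard := congrArg card (hrho.symm.trans hsigma)
    have := card_pos_iff_exists_mem.mpr ⟨k, hk⟩
    simp only [card_cons, card_erase_of_mem hk, Nat.pred_eq_sub_one] at hcard
    omega
  have hrhoi_ne : rhoi ≠ rhoj := by
    rintro rfl
    have hcount := congrArg (count i) (hrhoi.symm.trans hrhoj)
    have := count_pos.mpr hi
    simp only [count_cons, count_erase_self, count_erase_of_ne hij] at hcount
    split_ifs at hcount <;> omega
  calc 2 < ({rho, rhoi, rhoj} : Set (Nat.Partition n)).ncard := by
        rw [Set.ncard_eq_three.mpr ⟨rho, rhoi, rhoj, hrho_ne i hi _ hrhoi,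
          hrho_ne j hj _ hrhoj, hrhoi_ne, rfl⟩]
        norm_num
    _ ≤ _ := by
        refine Set.ncard_le_ncard ?_ (Set.toFinite _)
        rintro sigma (rfl | rfl | rfl)
        exacts [stepDown_iff.mpr (.inl hrho), stepDown_iff.mpr (.inr ⟨i, hi, hrhoi⟩),
          stepDown_iff.mpr (.inr ⟨j, hj, hrhoj⟩)]

theorem stepDown_iff_of_parts_eq_replicate {n k c : ℕ} {lam : Nat.Partition n}
    {nu : Nat.Partition (n - 1)} (hnu : nu.parts = replicate (k + 1) c) :
    stepDown lam nu ↔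
      lam.parts = 1 ::ₘ replicate (k + 1) c ∨ lam.parts = (c + 1) ::ₘ replicate k c := by
  rw [stepDown_iff, hnu]
  constructor
  · rintro (h | ⟨j, hj, h⟩)
    · exact .inl h
    · rw [eq_of_mem_replicate hj, replicate_succ, erase_cons_head] at h
      exact .inr h
  · rintro (h | h)
    · exact .inl h
    · exact .inr ⟨c, mem_replicate.mpr ⟨k.succ_ne_zero, rfl⟩, by
        rw [h, replicate_succ, erase_cons_head]⟩

theorem parts_eq_of_stepDown_of_parts_eq_replicate {n k c : ℕ} {lam : Nat.Partition n}
    {nu : Nat.Partition (n - 1)} (hlam : lam.parts = replicate (k + 1) c) (h : stepDown lam nu) :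
    nu.parts = filter (· ≠ 0) ((c - 1) ::ₘ replicate k c) := by
  obtain ⟨j, hj, hnu⟩ := h
  rw [hlam] at hj hnu
  rwa [eq_of_mem_replicate hj, replicate_succ, erase_cons_head] at hnu

theorem exists_adj_adj_of_parts_eq {n b : ℕ} {R : Multiset ℕ} {lam mu : Nat.Partition n}
    (hb : 0 < b) (hlam : lam.parts = (b + 2) ::ₘ (b + 1) ::ₘ R)
    (hmu : mu.parts = 1 ::ₘ (b + 1) ::ₘ (b + 1) ::ₘ R) :
    ∃ rho, (partitionGraph n).Adj rho lam ∧ (partitionGraph n).Adj rho mu := by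
  have hR : ∀ i ∈ R, 0 < i := fun i hi => lam.parts_pos (by simp [hlam, hi])
  have hsum := lam.parts_sum
  simp only [hlam, sum_cons] at hsum
  let rho : Nat.Partition n := ⟨1 ::ₘ (b + 2) ::ₘ b ::ₘ R,
    by simp only [mem_cons]; grind, by simp only [sum_cons]; omega⟩
  let nu : Nat.Partition (n - 1) := ⟨(b + 2) ::ₘ b ::ₘ R,
    by simp only [mem_cons]; grind, by simp only [sum_cons]; omega⟩
  let nu' : Nat.Partition (n - 1) := ⟨(b + 1) ::ₘ 1 ::ₘ b ::ₘ R,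
    by simp only [mem_cons]; grind, by simp only [sum_cons]; omega⟩
  have hrho_lam : rho ≠ lam := fun h => by
    simpa [hlam, rho] using congrArg (card ∘ Nat.Partition.parts) h
  have hrho_mu : rho ≠ mu := fun h => by
    simpa [hmu, rho, count_cons] using congrArg (count (b + 2) ∘ Nat.Partition.parts) h
  refine ⟨rho, ⟨hrho_lam, nu, stepDown_iff.mpr (.inl rfl),
      stepDown_of_parts_eq_succ_cons (j := b) (X := (b + 2) ::ₘ R) ?_ ?_⟩,
    ⟨hrho_mu, nu', stepDown_of_parts_eq_succ_cons (X := 1 ::ₘ b ::ₘ R) (cons_swap _ _ _) rfl,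
      stepDown_of_parts_eq_succ_cons (j := b) (X := 1 ::ₘ (b + 1) ::ₘ R) ?_ ?_⟩⟩
  · rw [hlam, cons_swap]
  · exact cons_swap _ _ _
  · rw [hmu, cons_swap]
  · show (b + 1) ::ₘ 1 ::ₘ b ::ₘ R = b ::ₘ 1 ::ₘ (b + 1) ::ₘ R
    rw [cons_swap, cons_swap (b + 1), cons_swap 1]

namespace Nat.Partition

@[simps]
def hook (n a : ℕ) (ha : 0 < a) (han : a ≤ n) : n.Partition where
  parts := a ::ₘ replicate (n - a) 1
  parts_pos hi := by
    rcases mem_cons.mp hi with rfl | hi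
    exacts [ha, by simp [eq_of_mem_replicate hi]]
  parts_sum := by simp only [sum_cons, sum_replicate, smul_eq_mul, mul_one]; omega

theorem hook_injective {n a b : ℕ} {ha : 0 < a} {han : a ≤ n} {hb : 0 < b} {hbn : b ≤ n}
    (h : hook n a ha han = hook n b hb hbn) : a = b := by
  have := congrArg (card ∘ parts) h
  simp only [Function.comp_apply, hook_parts, card_cons, card_replicate] at this
  omega

end Nat.Partition

open Nat.Partition

theorem partitionGraph_adj_hook_self_iff {n : ℕ} (hn : 2 ≤ n) (x : n.Partition) :
    (partitionGraph n).Adj (hook n n (by omega) le_rfl) x ↔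
      x = hook n (n - 1) (by omega) (by omega) := by
  have hdown : ∀ nu : (n - 1).Partition, stepDown (hook n n (by omega) le_rfl) nu →
      nu.parts = replicate (0 + 1) (n - 1) := fun nu h => by
    rw [parts_eq_of_stepDown_of_parts_eq_replicate (k := 0) (c := n)
        (by rw [hook_parts, Nat.sub_self]; rfl) h,
      replicate_zero, filter_cons_of_pos _ (by omega), filter_zero]
    rfl
  have hself : (hook n n (by omega) le_rfl).parts = (n - 1 + 1) ::ₘ replicate 0 (n - 1) := by
    rw [hook_parts, Nat.sub_self, Nat.sub_add_cancel (by omega : 1 ≤ n)]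
    rfl
  have hhook :
      (hook n (n - 1) (by omega) (by omega)).parts = 1 ::ₘ replicate (0 + 1) (n - 1) := by
    rw [hook_parts, Nat.sub_sub_self (by omega : 1 ≤ n)]
    exact cons_swap (n - 1) 1 0
  constructor
  · rintro ⟨hne, nu, hstep, hx⟩
    rcases (stepDown_iff_of_parts_eq_replicate (hdown nu hstep)).mp hx with h | h
    · exact Nat.Partition.ext (h.trans hhook.symm)
    · exact absurd (Nat.Partition.ext (hself.trans h.symm)) hne
  · rintro rfl
    let nu : (n - 1).Partition := indiscrete (n - 1)
    have hnu : nu.parts = replicate (0 + 1) (n - 1) := indiscrete_parts (by omega)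
    refine ⟨fun h => ?_, nu, (stepDown_iff_of_parts_eq_replicate hnu).mpr (.inr hself),
      (stepDown_iff_of_parts_eq_replicate hnu).mpr (.inl hhook)⟩
    have := hook_injective h
    omega

theorem partitionGraph_adj_hook_one_iff {n : ℕ} (hn : 2 ≤ n) (x : n.Partition) :
    (partitionGraph n).Adj (hook n 1 one_pos (by omega)) x ↔ x = hook n 2 two_pos hn := by
  have hreplicate : replicate (n - 1) 1 = replicate (n - 2 + 1) 1 := by congr 1; omega
  have hdown : ∀ nu : (n - 1).Partition, stepDown (hook n 1 one_pos (by omega)) nu →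
      nu.parts = replicate (n - 2 + 1) 1 := fun nu h => by
    rw [parts_eq_of_stepDown_of_parts_eq_replicate (k := n - 1) (c := 1) rfl h, Nat.sub_self,
      filter_cons_of_neg _ (by simp),
      filter_eq_self.mpr fun i hi => by simp [eq_of_mem_replicate hi], hreplicate]
  have hhook : (hook n 2 two_pos hn).parts = (1 + 1) ::ₘ replicate (n - 2) 1 := rfl
  constructor
  · rintro ⟨hne, nu, hstep, hx⟩
    rcases (stepDown_iff_of_parts_eq_replicate (hdown nu hstep)).mp hx with h | h
    · exact absurd (Nat.Partition.ext (by rw [h, hook_parts, hreplicate])) hne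
    · exact Nat.Partition.ext (h.trans hhook.symm)
  · rintro rfl
    let nu : (n - 1).Partition := hook (n - 1) 1 one_pos (by omega)
    have hnu : nu.parts = replicate (n - 2 + 1) 1 := by
      rw [hook_parts, Nat.sub_sub, ← replicate_succ]
    refine ⟨fun h => absurd (hook_injective h) (by decide), nu, ?_, ?_⟩
    · exact (stepDown_iff_of_parts_eq_replicate hnu).mpr (.inl (by rw [hook_parts, hreplicate]))
    · exact (stepDown_iff_of_parts_eq_replicate hnu).mpr (.inr hhook)

theorem IsMaxClique.exists_parts_eq_replicate {n : ℕ} (hn : 2 ≤ n) {lam mu : n.Partition}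
    {nu : (n - 1).Partition} (hs : IsMaxClique n {lam, mu}) (hlam : stepDown lam nu)
    (hmu : stepDown mu nu) : ∃ k c, nu.parts = replicate (k + 1) c := by
  have hconst : ∀ i ∈ nu.parts, ∀ j ∈ nu.parts, i = j := by
    by_contra! ⟨i, hi, j, hj, hij⟩
    have hle : {rho | stepDown rho nu}.ncard ≤ ({lam, mu} : Finset n.Partition).card := by
      rw [← Set.ncard_coe_finset]
      exact Set.ncard_le_ncard (fun rho => hs.mem_of_stepDown hlam hmu) (Set.toFinite _)
    have := Finset.card_le_two (a := lam) (b := mu)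
    have := two_lt_ncard_stepDown hi hj hij
    omega
  have hne : nu.parts ≠ 0 := fun h => by
    have := nu.parts_sum
    rw [h, sum_zero] at this
    omega
  obtain ⟨c, hc⟩ := exists_mem_of_ne_zero hne
  obtain ⟨k, hk⟩ := Nat.exists_eq_add_one_of_ne_zero (mt card_eq_zero.mp hne)
  exact ⟨k, c, hk ▸ eq_replicate_card.mpr fun i hi => hconst i hi c hc⟩

theorem IsMaxClique.eq_hook_pair_of_parts_eq {n k c : ℕ} (hn : 2 ≤ n) {lam mu : n.Partition}
    (hs : IsMaxClique n {lam, mu}) (hlam : lam.parts = (c + 1) ::ₘ replicate k c)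
    (hmu : mu.parts = 1 ::ₘ replicate (k + 1) c) :
    ({lam, mu} : Finset n.Partition) =
        {hook n n (by omega) le_rfl, hook n (n - 1) (by omega) (by omega)} ∨
      ({lam, mu} : Finset n.Partition) = {hook n 1 one_pos (by omega), hook n 2 two_pos hn} := by
  have hc : 0 < c := mu.parts_pos (by simp [hmu])
  have hsum := lam.parts_sum
  simp only [hlam, sum_cons, sum_replicate, smul_eq_mul] at hsum
  rcases k with _ | l
  · left
    congr 2 <;> ext1
    · rw [hlam, hook_parts, Nat.sub_self, show c + 1 = n by omega]
      rfl
    · rw [hmu, hook_parts, show n - (n - 1) = 1 by omega, show n - 1 = c by omega]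
      exact pair_comm _ _
  obtain ⟨b, rfl⟩ : ∃ b, c = b + 1 := ⟨c - 1, by omega⟩
  rcases b with _ | b
  · right
    rw [Finset.pair_comm]
    congr 2 <;> ext1
    · rw [hmu, hook_parts, show n - 1 = l + 1 + 1 by omega]
    · rw [hlam, hook_parts, show n - 2 = l + 1 by omega]
  · obtain ⟨rho, hrho_lam, hrho_mu⟩ :=
      exists_adj_adj_of_parts_eq (b := b + 1) (R := replicate l (b + 2)) b.succ_pos hlam hmu
    have hmem : rho ∈ ({lam, mu} : Finset n.Partition) := hs.mem_of_forall_adj fun x hx _ => by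
      rcases Finset.mem_insert.mp hx with rfl | hx
      exacts [hrho_lam, Finset.mem_singleton.mp hx ▸ hrho_mu]
    rcases Finset.mem_insert.mp hmem with h | h
    · exact absurd h hrho_lam.ne
    · exact absurd (Finset.mem_singleton.mp h) hrho_mu.ne

theorem setOf_isMaxClique_card_eq_two {n : ℕ} (hn : 2 ≤ n) :
    {s : Finset n.Partition | IsMaxClique n s ∧ s.card = 2} =
      {{hook n n (by omega) le_rfl, hook n (n - 1) (by omega) (by omega)},
        {hook n 1 one_pos (by omega), hook n 2 two_pos hn}} := by
  ext s
  simp only [Set.mem_ofPred_eq, Set.mem_insert_iff, Set.mem_singleton_iff]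
  constructor
  · rintro ⟨hs, hcard⟩
    obtain ⟨lam, mu, hne, rfl⟩ := Finset.card_eq_two.mp hcard
    obtain ⟨-, nu, hlam, hmu⟩ := hs.1 (by simp) (by simp) hne
    obtain ⟨k, c, hnu⟩ := hs.exists_parts_eq_replicate hn hlam hmu
    rcases (stepDown_iff_of_parts_eq_replicate hnu).mp hlam with hl | hl <;>
      rcases (stepDown_iff_of_parts_eq_replicate hnu).mp hmu with hm | hm
    · exact absurd (Nat.Partition.ext (hl.trans hm.symm)) hne
    · rw [Finset.pair_comm] at hs
      rw [Finset.pair_comm lam mu]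
      exact hs.eq_hook_pair_of_parts_eq hn hm hl
    · exact hs.eq_hook_pair_of_parts_eq hn hl hm
    · exact absurd (Nat.Partition.ext (hl.trans hm.symm)) hne
  · rintro (rfl | rfl)
    · exact ⟨isMaxClique_pair_of_forall_adj_iff (partitionGraph_adj_hook_self_iff hn),
        Finset.card_pair ((partitionGraph_adj_hook_self_iff hn _).mpr rfl).ne⟩
    · exact ⟨isMaxClique_pair_of_forall_adj_iff (partitionGraph_adj_hook_one_iff hn),
        Finset.card_pair ((partitionGraph_adj_hook_one_iff hn _).mpr rfl).ne⟩

theorem maxEdgeCount_two : maxEdgeCount 2 = 1 := by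
  rw [maxEdgeCount, setOf_isMaxClique_card_eq_two le_rfl, Finset.pair_comm (hook 2 1 _ _),
    Set.pair_eq_singleton, Set.ncard_singleton]

theorem maxEdgeCount_of_three_le {n : ℕ} (hn : 3 ≤ n) : maxEdgeCount n = 2 := by
  rw [maxEdgeCount, setOf_isMaxClique_card_eq_two (by omega)]
  refine Set.ncard_pair fun h => ?_
  have hmem := h ▸ Finset.mem_insert_self (hook n n (by omega) le_rfl) {hook n (n - 1) _ _}
  simp only [Finset.mem_insert, Finset.mem_singleton] at hmem
  rcases hmem with h | h <;> have := hook_injective h <;> omega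

theorem stmt16 :
    maxEdgeCount 2 = 1 ∧ ∀ n : ℕ, 3 ≤ n → n ≤ 25 → maxEdgeCount n = 2 :=
  ⟨maxEdgeCount_two, fun _ hn _ => maxEdgeCount_of_three_le hn⟩
end
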